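/- arXiv:2601.16167 — 4 statements merged into one kernel-verified Lean document; each statement's English description precedes it below -/
import Mathlib

section
/- Let n ≥ 3, let μ be a finite Borel measure on ℝⁿ, q ∈ ℝⁿ, e ∈ ℝⁿ a unit vector, and let 0 < a ≤ R. Suppose the support of μ is contained in {y ∈ ℝⁿ : ⟨e, y − q⟩ ≥ a} ∩ {y : ‖y − q‖ ≤ R}. Then the potential u(x) := ∫ ‖x − y‖^{2−n} dμ(y) is differentiable at q and the directional derivative of u at q along e satisfies ⟨e, ∇u(q)⟩ ≥ (n − 2) a μ(ℝⁿ) R^{−n}. -/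
open MeasureTheory Metric
open scoped RealInnerProductSpace

/-!
Differentiate under the integral sign. For μ-a.e. `y` the point `q` is at distance at least `a`
from `y`, so on the ball of radius `a / 2` around `q` the gradient `p ‖x - y‖ ^ (p - 2) (x - y)` of
the kernel (`p = 2 - n`) is bounded by `|p| (a / 2) ^ (p - 1)`, which is integrable for the finite
measure `μ`. At `q` this gradient pairs with `e` to `(n - 2) ⟪e, y - q⟫ ‖y - q‖ ^ (-n)`, which is at
least `(n - 2) a R ^ (-n)` on the support of `μ`; integrating gives the bound.
-/

section

variable {E : Type*} [NormedAddCommGroup E] [InnerProductSpace ℝ E]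

theorem hasStrictFDerivAt_norm_rpow_of_ne_zero {x : E} (p : ℝ) (hx : x ≠ 0) :
    HasStrictFDerivAt (fun x : E ↦ ‖x‖ ^ p) ((p * ‖x‖ ^ (p - 2)) • innerSL ℝ x) x := by
  convert (hasStrictFDerivAt_norm_sq x).rpow_const (p := p / 2) (by simp [hx]) using 0
  simp_rw [← Real.rpow_natCast_mul (norm_nonneg _), ← Nat.cast_smul_eq_nsmul ℝ, smul_smul]
  ring_nf

theorem hasGradientAt_norm_sub_rpow [CompleteSpace E] {x y : E} (p : ℝ) (hxy : x ≠ y) :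
    HasGradientAt (fun x ↦ ‖x - y‖ ^ p) ((p * ‖x - y‖ ^ (p - 2)) • (x - y)) x := by
  rw [hasGradientAt_iff_hasFDerivAt]
  refine ((hasStrictFDerivAt_norm_rpow_of_ne_zero p (sub_ne_zero.2 hxy)).hasFDerivAt.comp x
    ((hasFDerivAt_id x).sub_const y)).congr_fderiv ?_
  ext v
  simp

theorem norm_smul_rpow_norm_le {p b : ℝ} {v : E} (hp : p ≤ 1) (hb : 0 < b) (hbv : b ≤ ‖v‖) :
    ‖(p * ‖v‖ ^ (p - 2)) • v‖ ≤ |p| * b ^ (p - 1) := by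
  have hv : 0 < ‖v‖ := hb.trans_le hbv
  calc ‖(p * ‖v‖ ^ (p - 2)) • v‖ = |p| * ‖v‖ ^ (p - 1) := by
        rw [norm_smul, Real.norm_eq_abs, abs_mul, abs_of_nonneg (Real.rpow_nonneg hv.le _),
          mul_assoc, ← Real.rpow_add_one hv.ne']
        ring_nf
    _ ≤ |p| * b ^ (p - 1) :=
        mul_le_mul_of_nonneg_left (Real.rpow_le_rpow_of_nonpos hb hbv (by linarith)) (abs_nonneg p)

theorem neg_mul_mul_rpow_le_inner_smul {p a R : ℝ} {e x y : E} (hp : p ≤ 0) (ha : 0 < a)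
    (hay : a ≤ ⟪e, y - x⟫) (hyR : ‖y - x‖ ≤ R) :
    -p * a * R ^ (p - 2) ≤ ⟪e, (p * ‖x - y‖ ^ (p - 2)) • (x - y)⟫ := by
  have hyx : 0 < ‖y - x‖ := by
    refine norm_pos_iff.2 fun h ↦ ?_
    rw [h, inner_zero_right] at hay
    linarith
  have hR : R ^ (p - 2) ≤ ‖y - x‖ ^ (p - 2) :=
    Real.rpow_le_rpow_of_nonpos hyx hyR (by linarith)
  rw [real_inner_smul_right, ← neg_sub y x, norm_neg, inner_neg_right]
  have hnp : 0 ≤ -p := by linarith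
  calc -p * a * R ^ (p - 2) ≤ -p * ⟪e, y - x⟫ * ‖y - x‖ ^ (p - 2) :=
        mul_le_mul (mul_le_mul_of_nonneg_left hay hnp) hR
          (Real.rpow_nonneg (hyx.le.trans hyR) _) (mul_nonneg hnp (ha.le.trans hay))
    _ = _ := by ring

end

section

variable {E : Type*} [NormedAddCommGroup E] [MeasurableSpace E] [BorelSpace E]
  {μ : Measure E} [IsFiniteMeasure μ] {p a : ℝ} {q : E}

theorem integrable_rpow_norm_sub (hp : p ≤ 0) (ha : 0 < a) (hμ : ∀ᵐ y ∂μ, a ≤ ‖q - y‖) :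
    Integrable (fun y ↦ ‖q - y‖ ^ p) μ := by
  refine (integrable_const (a ^ p)).mono' (by fun_prop : Measurable _).aestronglyMeasurable ?_
  filter_upwards [hμ] with y hy
  rw [Real.norm_of_nonneg (by positivity)]
  exact Real.rpow_le_rpow_of_nonpos ha hy hp

theorem integrable_smul_rpow_norm_sub [InnerProductSpace ℝ E] [SecondCountableTopology E]
    (hp : p ≤ 1) (ha : 0 < a) (hμ : ∀ᵐ y ∂μ, a ≤ ‖q - y‖) :
    Integrable (fun y ↦ (p * ‖q - y‖ ^ (p - 2)) • (q - y)) μ := by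
  refine (integrable_const (|p| * a ^ (p - 1))).mono'
    (by fun_prop : Measurable _).aestronglyMeasurable ?_
  filter_upwards [hμ] with y hy
  exact norm_smul_rpow_norm_le hp ha hy

theorem hasGradientAt_integral_rpow_norm_sub [InnerProductSpace ℝ E] [CompleteSpace E]
    [SecondCountableTopology E] (hp : p ≤ 0) (ha : 0 < a) (hμ : ∀ᵐ y ∂μ, a ≤ ‖q - y‖) :
    HasGradientAt (fun x ↦ ∫ y, ‖x - y‖ ^ p ∂μ)
      (∫ y, (p * ‖q - y‖ ^ (p - 2)) • (q - y) ∂μ) q := by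
  have hfar : ∀ᵐ y ∂μ, ∀ x ∈ ball q (a / 2), a / 2 ≤ ‖x - y‖ := by
    filter_upwards [hμ] with y hy x hx
    have := norm_sub_le_norm_sub_add_norm_sub q x y
    rw [mem_ball, dist_eq_norm, ← norm_neg, neg_sub] at hx
    linarith
  rw [hasGradientAt_iff_hasFDerivAt]
  refine (hasFDerivAt_integral_of_dominated_of_fderiv_le
    (F' := fun x y ↦ InnerProductSpace.toDual ℝ E ((p * ‖x - y‖ ^ (p - 2)) • (x - y)))
    (bound := fun _ ↦ |p| * (a / 2) ^ (p - 1)) (ball_mem_nhds q (half_pos ha))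
    (.of_forall fun x ↦ (by fun_prop : Measurable _).aestronglyMeasurable)
    (integrable_rpow_norm_sub hp ha hμ) ?_ ?_ (integrable_const _) ?_).congr_fderiv
    ((InnerProductSpace.toDual ℝ E).toLinearIsometry.integral_comp_comm _)
  · exact (InnerProductSpace.toDual ℝ E).continuous.comp_aestronglyMeasurable
      (by fun_prop : Measurable _).aestronglyMeasurable
  · filter_upwards [hfar] with y hy x hx
    rw [LinearIsometryEquiv.norm_map]
    exact norm_smul_rpow_norm_le (by linarith) (half_pos ha) (hy x hx)
  · filter_upwards [hfar] with y hy x hx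
    refine (hasGradientAt_norm_sub_rpow p fun hxy ↦ ?_).hasFDerivAt
    have := hy x hx
    rw [hxy, sub_self, norm_zero] at this
    linarith

end

theorem stmt5_general (n : ℕ) (hn : 3 ≤ n)
    (μ : Measure (EuclideanSpace ℝ (Fin n))) [IsFiniteMeasure μ]
    (q e : EuclideanSpace ℝ (Fin n)) (he : ‖e‖ = 1)
    (a R : ℝ) (ha : 0 < a)
    (hsupp : μ ({y | a ≤ ⟪e, y - q⟫ ∧ ‖y - q‖ ≤ R}ᶜ) = 0) :
    ∃ g : EuclideanSpace ℝ (Fin n),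
      HasGradientAt (fun x => ∫ y, ‖x - y‖ ^ ((2 : ℝ) - n) ∂μ) g q ∧
      ((n : ℝ) - 2) * a * (μ Set.univ).toReal * R ^ (-(n : ℝ)) ≤ ⟪e, g⟫ := by
  have hp : (2 : ℝ) - n ≤ 0 := by
    have : (3 : ℝ) ≤ n := by exact_mod_cast hn
    linarith
  have hμ : ∀ᵐ y ∂μ, a ≤ ⟪e, y - q⟫ ∧ ‖y - q‖ ≤ R := ae_iff.2 hsupp
  have hfar : ∀ᵐ y ∂μ, a ≤ ‖q - y‖ := hμ.mono fun y hy ↦ by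
    simpa [he, norm_sub_rev] using hy.1.trans (real_inner_le_norm e (y - q))
  refine ⟨_, hasGradientAt_integral_rpow_norm_sub hp ha hfar, ?_⟩
  have hint := integrable_smul_rpow_norm_sub (p := 2 - n) (by linarith) ha hfar
  have hlow : ∀ᵐ y ∂μ, -((2 : ℝ) - n) * a * R ^ ((2 : ℝ) - n - 2) ≤
      ⟪e, (((2 : ℝ) - n) * ‖q - y‖ ^ ((2 : ℝ) - n - 2)) • (q - y)⟫ :=
    hμ.mono fun y hy ↦ neg_mul_mul_rpow_le_inner_smul hp ha hy.1 hy.2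
  rw [← integral_inner hint]
  calc ((n : ℝ) - 2) * a * (μ Set.univ).toReal * R ^ (-(n : ℝ))
      = μ.real Set.univ • (-((2 : ℝ) - n) * a * R ^ ((2 : ℝ) - n - 2)) := by
        rw [show (2 : ℝ) - n - 2 = -n by ring, measureReal_def, smul_eq_mul]
        ring
    _ ≤ _ := (integral_const _).symm.trans_le
        (integral_mono_ae (integrable_const _) ((innerSL ℝ e).integrable_comp hint) hlow)

/-- If `μ` is a finite Borel measure on `ℝⁿ` (`n ≥ 3`) supported in
`{y : ⟨e, y - q⟩ ≥ a} ∩ {y : ‖y - q‖ ≤ R}` with `0 < a ≤ R` and `e` a unit vector, then the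
potential `u(x) = ∫ ‖x - y‖^{2-n} dμ(y)` is differentiable at `q` and its directional
derivative at `q` along `e` is at least `(n-2) a μ(ℝⁿ) R^{-n}`. -/
theorem stmt5 (n : ℕ) (hn : 3 ≤ n)
    (μ : Measure (EuclideanSpace ℝ (Fin n))) [IsFiniteMeasure μ]
    (q e : EuclideanSpace ℝ (Fin n)) (he : ‖e‖ = 1)
    (a R : ℝ) (ha : 0 < a) (haR : a ≤ R)
    (hsupp : μ ({y | a ≤ ⟪e, y - q⟫ ∧ ‖y - q‖ ≤ R}ᶜ) = 0) :
    ∃ g : EuclideanSpace ℝ (Fin n),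
      HasGradientAt (fun x => ∫ y, ‖x - y‖ ^ ((2 : ℝ) - n) ∂μ) g q ∧
      ((n : ℝ) - 2) * a * (μ Set.univ).toReal * R ^ (-(n : ℝ)) ≤ ⟪e, g⟫ :=
  stmt5_general n hn μ q e he a R ha hsupp
end

section
/- Let n ≥ 3. There exists a constant A = A(n) > 0 with the following property. Let C₁ > 0 and c₀ > 0, let σ be a Borel measure on ℝⁿ satisfying σ(B(x, t)) ≤ C₁ t^{n−1} for every x ∈ ℝⁿ and t > 0, let z ∈ ℝⁿ and r > 0 satisfy σ(B(z, r/2)) ≥ c₀ r^{n−1}, and let ω be a finite Borel measure on ℝⁿ. Then there exists a point q ∈ B(z, r/2) such that ∫ ‖x − q‖^{2−n} dω(x) ≤ A (C₁ / c₀) ω(ℝⁿ) r^{2−n}. -/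
/-!
Average over `q ∈ B := B(z, r/2)` with respect to `σ`. By Tonelli, the `σ`-average of
`q ↦ ∫ ‖x - q‖^{2-n} dω(x)` is `σ(B)⁻¹ ∫ (∫_B ‖x - q‖^{2-n} dσ(q)) dω(x)`, and some `q ∈ B`
lies below the average. For each fixed `x` the inner integral is `O(C₁ r)`: outside
`B̄(x, r/2)` the kernel is at most `(r/2)^{2-n}` and `σ(B) ≤ C₁ (r/2)^{n-1}`, while inside, on
the dyadic annuli around `x`, the growth exponent `n - 1` beats the singularity `2 - n` by a
geometric factor `1/2`. Dividing by `σ(B) ≥ c₀ r^{n-1}` gives the bound.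
-/

open MeasureTheory Metric Filter Topology
open scoped ENNReal

theorem exists_mem_dyadic_annulus {X : Type*} [MetricSpace X] {x q : X} {ρ : ℝ}
    (hq : q ∈ closedBall x ρ) (hqx : q ≠ x) :
    ∃ j : ℕ, q ∈ closedBall x (ρ / 2 ^ j) \ closedBall x (ρ / 2 ^ (j + 1)) := by
  have hpos : 0 < dist q x := dist_pos.2 hqx
  obtain ⟨j, hj, hj'⟩ := exists_nat_pow_near (x := ρ / dist q x) (y := (2 : ℝ))
    ((one_le_div hpos).2 hq) one_lt_two
  refine ⟨j, mem_closedBall.2 ?_, fun h => (mem_closedBall.1 h).not_gt ?_⟩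
  · rwa [le_div_iff₀ hpos, ← le_div_iff₀' (by positivity)] at hj
  · rwa [div_lt_iff₀ hpos, ← div_lt_iff₀' (by positivity)] at hj'

theorem ENNReal.ofReal_rpow_neg_le_of_le {t a s : ℝ} (ht : 0 < t) (hta : t ≤ a) (hs : 0 ≤ s) :
    ENNReal.ofReal a ^ (-s) ≤ ENNReal.ofReal (t ^ (-s)) := by
  rw [ENNReal.ofReal_rpow_of_pos (ht.trans_le hta)]
  exact ENNReal.ofReal_le_ofReal (Real.rpow_le_rpow_of_nonpos ht hta (neg_nonpos.2 hs))

theorem div_two_pow_succ_rpow_neg_mul_div_two_pow_rpow {ρ s d : ℝ} (hρ : 0 < ρ) (j : ℕ) :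
    (ρ / 2 ^ (j + 1)) ^ (-s) * (ρ / 2 ^ j) ^ d = 2 ^ s * ρ ^ (d - s) * (2 ^ (s - d)) ^ j := by
  have h2j : (0 : ℝ) < 2 ^ j := by positivity
  rw [pow_succ, ← div_div, Real.div_rpow (by positivity) zero_le_two, Real.rpow_neg zero_le_two,
    div_inv_eq_mul, mul_right_comm, ← Real.rpow_add (by positivity), neg_add_eq_sub,
    Real.div_rpow hρ.le h2j.le, ← Real.rpow_natCast, ← Real.rpow_mul zero_le_two,
    ← Real.rpow_natCast, ← Real.rpow_mul zero_le_two, div_eq_mul_inv,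
    ← Real.rpow_neg zero_le_two, show -((j : ℝ) * (d - s)) = (s - d) * j by ring]
  ac_rfl

def HasUpperGrowth {X : Type*} [PseudoMetricSpace X] [MeasurableSpace X] (σ : Measure X)
    (C d : ℝ) : Prop :=
  ∀ (x : X) (t : ℝ), 0 < t → σ (ball x t) ≤ ENNReal.ofReal (C * t ^ d)

namespace HasUpperGrowth

section PseudoMetricSpace

variable {X : Type*} [PseudoMetricSpace X] [MeasurableSpace X] {σ : Measure X} {C d : ℝ}

theorem measure_closedBall_le (h : HasUpperGrowth σ C d) (hd : 0 ≤ d) (x : X) {t : ℝ}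
    (ht : 0 ≤ t) : σ (closedBall x t) ≤ ENNReal.ofReal (C * t ^ d) := by
  have hlim : Tendsto (fun u : ℝ => ENNReal.ofReal (C * u ^ d)) (𝓝[>] t)
      (𝓝 (ENNReal.ofReal (C * t ^ d))) :=
    (ENNReal.tendsto_ofReal
      ((Real.continuousAt_rpow_const t d (Or.inr hd)).const_mul C).tendsto).mono_left
      nhdsWithin_le_nhds
  refine ge_of_tendsto hlim (eventually_nhdsWithin_of_forall fun u hu => ?_)
  exact (measure_mono (closedBall_subset_ball hu)).trans (h x u (ht.trans_lt hu))

theorem measure_singleton (h : HasUpperGrowth σ C d) (hd : 0 < d) (x : X) : σ {x} = 0 :=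
  measure_mono_null (Set.singleton_subset_iff.2 (mem_closedBall_self le_rfl)) <| by
    simpa [Real.zero_rpow hd.ne'] using h.measure_closedBall_le hd.le x le_rfl

end PseudoMetricSpace

variable {X : Type*} [MetricSpace X] [MeasurableSpace X] {σ : Measure X} {C d : ℝ}

theorem lintegral_closedBall_rpow_neg_dist_le (h : HasUpperGrowth σ C d) (hC : 0 ≤ C) {s : ℝ}
    (hs : 0 ≤ s) (hsd : s < d) (x : X) {ρ : ℝ} (hρ : 0 < ρ) :
    ∫⁻ q in closedBall x ρ, ENNReal.ofReal (dist x q) ^ (-s) ∂σ ≤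
      ENNReal.ofReal (2 ^ s / (1 - 2 ^ (s - d)) * C * ρ ^ (d - s)) := by
  set A : ℕ → Set X := fun j => closedBall x (ρ / 2 ^ j) \ closedBall x (ρ / 2 ^ (j + 1))
  have hcover : closedBall x ρ ⊆ {x} ∪ ⋃ j, A j := by
    intro q hq
    rcases eq_or_ne q x with rfl | hqx
    · exact Or.inl rfl
    · exact Or.inr (Set.mem_iUnion.2 (exists_mem_dyadic_annulus hq hqx))
  have hannulus (j : ℕ) : ∫⁻ q in A j, ENNReal.ofReal (dist x q) ^ (-s) ∂σ ≤
      ENNReal.ofReal (2 ^ s * C * ρ ^ (d - s) * (2 ^ (s - d)) ^ j) := by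
    have hk : ∀ q ∈ A j,
        ENNReal.ofReal (dist x q) ^ (-s) ≤ ENNReal.ofReal ((ρ / 2 ^ (j + 1)) ^ (-s)) :=
      fun q hq => ENNReal.ofReal_rpow_neg_le_of_le (by positivity)
        (by rw [dist_comm]; exact (not_le.1 hq.2).le) hs
    calc ∫⁻ q in A j, ENNReal.ofReal (dist x q) ^ (-s) ∂σ
        ≤ ∫⁻ _ in A j, ENNReal.ofReal ((ρ / 2 ^ (j + 1)) ^ (-s)) ∂σ :=
          setLIntegral_mono measurable_const hk
      _ = ENNReal.ofReal ((ρ / 2 ^ (j + 1)) ^ (-s)) * σ (A j) := setLIntegral_const _ _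
      _ ≤ ENNReal.ofReal ((ρ / 2 ^ (j + 1)) ^ (-s)) * ENNReal.ofReal (C * (ρ / 2 ^ j) ^ d) := by
          gcongr
          exact (measure_mono Set.sdiff_subset).trans
            (h.measure_closedBall_le (hs.trans hsd.le) x (by positivity))
      _ = ENNReal.ofReal (2 ^ s * C * ρ ^ (d - s) * (2 ^ (s - d)) ^ j) := by
          rw [← ENNReal.ofReal_mul (by positivity), mul_left_comm,
            div_two_pow_succ_rpow_neg_mul_div_two_pow_rpow hρ]
          congr 1
          ring
  have hr₀ : (0 : ℝ) ≤ 2 ^ (s - d) := by positivity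
  have hr₁ : (2 : ℝ) ^ (s - d) < 1 := Real.rpow_lt_one_of_one_lt_of_neg one_lt_two (by linarith)
  calc ∫⁻ q in closedBall x ρ, ENNReal.ofReal (dist x q) ^ (-s) ∂σ
      ≤ ∫⁻ q in {x} ∪ ⋃ j, A j, ENNReal.ofReal (dist x q) ^ (-s) ∂σ :=
        lintegral_mono_set hcover
    _ ≤ ∫⁻ q in {x}, ENNReal.ofReal (dist x q) ^ (-s) ∂σ +
          ∫⁻ q in ⋃ j, A j, ENNReal.ofReal (dist x q) ^ (-s) ∂σ := lintegral_union_le _ _ _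
    -- the kernel is `∞` at `x`, but `σ {x} = 0`
    _ = ∫⁻ q in ⋃ j, A j, ENNReal.ofReal (dist x q) ^ (-s) ∂σ := by
        rw [setLIntegral_measure_zero _ _ (h.measure_singleton (hs.trans_lt hsd) x), zero_add]
    _ ≤ ∑' j, ∫⁻ q in A j, ENNReal.ofReal (dist x q) ^ (-s) ∂σ := lintegral_iUnion_le _ _
    _ ≤ ∑' j, ENNReal.ofReal (2 ^ s * C * ρ ^ (d - s) * (2 ^ (s - d)) ^ j) :=
        ENNReal.tsum_le_tsum hannulus
    _ = ENNReal.ofReal (2 ^ s / (1 - 2 ^ (s - d)) * C * ρ ^ (d - s)) := by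
        rw [← ENNReal.ofReal_tsum_of_nonneg (fun j => by positivity)
          ((summable_geometric_of_lt_one hr₀ hr₁).mul_left _), tsum_mul_left,
          tsum_geometric_of_lt_one hr₀ hr₁]
        congr 1
        ring

theorem setLIntegral_rpow_neg_dist_le [OpensMeasurableSpace X] (h : HasUpperGrowth σ C d)
    (hC : 0 ≤ C) {s : ℝ} (hs : 0 ≤ s) (hsd : s < d) (x : X) {ρ : ℝ} (hρ : 0 < ρ)
    {B : Set X} (hB : σ B ≤ ENNReal.ofReal (C * ρ ^ d)) :
    ∫⁻ q in B, ENNReal.ofReal (dist x q) ^ (-s) ∂σ ≤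
      ENNReal.ofReal ((2 ^ s / (1 - 2 ^ (s - d)) + 1) * C * ρ ^ (d - s)) := by
  have hK : 0 ≤ (2 : ℝ) ^ s / (1 - 2 ^ (s - d)) := by
    have : (2 : ℝ) ^ (s - d) < 1 := Real.rpow_lt_one_of_one_lt_of_neg one_lt_two (by linarith)
    exact div_nonneg (by positivity) (by linarith)
  have hnear : ∫⁻ q in closedBall x ρ, ENNReal.ofReal (dist x q) ^ (-s) ∂σ.restrict B ≤
      ENNReal.ofReal (2 ^ s / (1 - 2 ^ (s - d)) * C * ρ ^ (d - s)) :=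
    (lintegral_mono' (Measure.restrict_mono subset_rfl Measure.restrict_le_self) le_rfl).trans
      (h.lintegral_closedBall_rpow_neg_dist_le hC hs hsd x hρ)
  have hfar : ∫⁻ q in (closedBall x ρ)ᶜ, ENNReal.ofReal (dist x q) ^ (-s) ∂σ.restrict B ≤
      ENNReal.ofReal (C * ρ ^ (d - s)) := by
    have hk : ∀ q ∈ (closedBall x ρ)ᶜ,
        ENNReal.ofReal (dist x q) ^ (-s) ≤ ENNReal.ofReal (ρ ^ (-s)) :=
      fun q hq => ENNReal.ofReal_rpow_neg_le_of_le hρ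
        (by rw [dist_comm]; exact (not_le.1 (mem_closedBall.not.1 hq)).le) hs
    calc ∫⁻ q in (closedBall x ρ)ᶜ, ENNReal.ofReal (dist x q) ^ (-s) ∂σ.restrict B
        ≤ ∫⁻ _ in (closedBall x ρ)ᶜ, ENNReal.ofReal (ρ ^ (-s)) ∂σ.restrict B :=
          setLIntegral_mono measurable_const hk
      _ = ENNReal.ofReal (ρ ^ (-s)) * σ.restrict B (closedBall x ρ)ᶜ := setLIntegral_const _ _
      _ ≤ ENNReal.ofReal (ρ ^ (-s)) * ENNReal.ofReal (C * ρ ^ d) := by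
          gcongr
          exact (measure_mono (Set.subset_univ _)).trans
            ((Measure.restrict_apply_univ B).trans_le hB)
      _ = ENNReal.ofReal (C * ρ ^ (d - s)) := by
          rw [← ENNReal.ofReal_mul (by positivity), mul_left_comm, ← Real.rpow_add hρ,
            neg_add_eq_sub]
  calc ∫⁻ q in B, ENNReal.ofReal (dist x q) ^ (-s) ∂σ
      = ∫⁻ q in closedBall x ρ, ENNReal.ofReal (dist x q) ^ (-s) ∂σ.restrict B +
          ∫⁻ q in (closedBall x ρ)ᶜ, ENNReal.ofReal (dist x q) ^ (-s) ∂σ.restrict B :=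
        (lintegral_add_compl _ measurableSet_closedBall).symm
    _ ≤ ENNReal.ofReal (2 ^ s / (1 - 2 ^ (s - d)) * C * ρ ^ (d - s)) +
          ENNReal.ofReal (C * ρ ^ (d - s)) := add_le_add hnear hfar
    _ = ENNReal.ofReal ((2 ^ s / (1 - 2 ^ (s - d)) + 1) * C * ρ ^ (d - s)) := by
        rw [← ENNReal.ofReal_add (by positivity) (by positivity)]
        congr 1
        ring

end HasUpperGrowth

theorem exists_mem_lintegral_le_of_forall_setLIntegral_le {X Y : Type*} [MeasurableSpace X]
    [MeasurableSpace Y] {σ : Measure X} {ω : Measure Y} [SFinite ω] {B : Set X}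
    (hB₀ : σ B ≠ 0) (hB : σ B ≠ ∞) {F : Y → X → ℝ≥0∞} (hF : Measurable (Function.uncurry F))
    {M : ℝ≥0∞} (hM : ∀ y, ∫⁻ q in B, F y q ∂σ ≤ M) :
    ∃ q ∈ B, ∫⁻ y, F y q ∂ω ≤ M * ω Set.univ / σ B := by
  have := isFiniteMeasure_restrict.2 hB
  obtain ⟨q, hqB, hq⟩ :=
    exists_le_setLAverage hB₀ hB (hF.lintegral_prod_left (μ := ω)).aemeasurable
  refine ⟨q, hqB, hq.trans ?_⟩
  rw [setLAverage_eq,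
    lintegral_lintegral_swap (f := fun q y => F y q) (hF.comp measurable_swap).aemeasurable]
  gcongr
  calc ∫⁻ y, ∫⁻ q in B, F y q ∂σ ∂ω ≤ ∫⁻ _, M ∂ω := lintegral_mono hM
    _ = M * ω Set.univ := lintegral_const M

/-- There is `A = A(n) > 0` such that: if `σ` has `(n-1)`-growth with
constant `C₁` and `σ(B(z, r/2)) ≥ c₀ r^{n-1}`, then for any finite measure `ω` there is a
point `q ∈ B(z, r/2)` at which the potential of `ω` is at most
`A (C₁/c₀) ω(ℝⁿ) r^{2-n}`. -/
theorem stmt8 (n : ℕ) (hn : 3 ≤ n) :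
    ∃ A : ℝ, 0 < A ∧
      ∀ C₁ c₀ : ℝ, 0 < C₁ → 0 < c₀ →
      ∀ σ : Measure (EuclideanSpace ℝ (Fin n)),
        (∀ (x : EuclideanSpace ℝ (Fin n)) (t : ℝ), 0 < t →
          σ (Metric.ball x t) ≤ ENNReal.ofReal (C₁ * t ^ ((n : ℝ) - 1))) →
      ∀ (z : EuclideanSpace ℝ (Fin n)) (r : ℝ), 0 < r →
        ENNReal.ofReal (c₀ * r ^ ((n : ℝ) - 1)) ≤ σ (Metric.ball z (r / 2)) →
      ∀ ω : Measure (EuclideanSpace ℝ (Fin n)), IsFiniteMeasure ω →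
        ∃ q ∈ Metric.ball z (r / 2),
          (∫⁻ x, (ENNReal.ofReal ‖x - q‖) ^ ((2 : ℝ) - n) ∂ω) ≤
            ENNReal.ofReal (A * (C₁ / c₀) * (ω Set.univ).toReal * r ^ ((2 : ℝ) - n)) := by
  have hs : (0 : ℝ) ≤ n - 2 := by
    have : (3 : ℝ) ≤ n := by exact_mod_cast hn
    linarith
  have hsd : (n : ℝ) - 2 < n - 1 := by linarith
  set K : ℝ := 2 ^ ((n : ℝ) - 2) / (1 - 2 ^ ((n : ℝ) - 2 - (n - 1))) + 1
  have hK : 0 < K := by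
    have : (2 : ℝ) ^ ((n : ℝ) - 2 - (n - 1)) < 1 :=
      Real.rpow_lt_one_of_one_lt_of_neg one_lt_two (by linarith)
    exact add_pos_of_nonneg_of_pos (div_nonneg (by positivity) (by linarith)) one_pos
  refine ⟨K / 2, half_pos hK, fun C₁ c₀ hC₁ hc₀ σ hσ z r hr hσz ω _ => ?_⟩
  have hB : σ (ball z (r / 2)) ≤ ENNReal.ofReal (C₁ * (r / 2) ^ ((n : ℝ) - 1)) :=
    hσ z _ (half_pos hr)
  have hB₀ : σ (ball z (r / 2)) ≠ 0 :=
    ((ENNReal.ofReal_pos.2 (by positivity)).trans_le hσz).ne'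
  obtain ⟨q, hq, hle⟩ := exists_mem_lintegral_le_of_forall_setLIntegral_le (ω := ω) hB₀
    (hB.trans_lt ENNReal.ofReal_lt_top).ne
    (F := fun x q => ENNReal.ofReal ‖x - q‖ ^ ((2 : ℝ) - n)) (by fun_prop)
    (fun x => by simpa only [dist_eq_norm, neg_sub] using
      HasUpperGrowth.setLIntegral_rpow_neg_dist_le hσ hC₁.le hs hsd x (half_pos hr) hB)
  refine ⟨q, hq, hle.trans (ENNReal.div_le_of_le_mul ?_)⟩
  have hr₁ : r ^ ((2 : ℝ) - n) * r ^ ((n : ℝ) - 1) = r := by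
    rw [← Real.rpow_add hr, show (2 : ℝ) - n + (n - 1) = 1 by ring, Real.rpow_one]
  calc ENNReal.ofReal (K * C₁ * (r / 2) ^ ((n : ℝ) - 1 - (n - 2))) * ω Set.univ
      = ENNReal.ofReal (K / 2 * (C₁ / c₀) * (ω Set.univ).toReal * r ^ ((2 : ℝ) - n)) *
          ENNReal.ofReal (c₀ * r ^ ((n : ℝ) - 1)) := by
        rw [← ENNReal.ofReal_toReal (measure_ne_top ω Set.univ), ← ENNReal.ofReal_mul
          (by positivity), ← ENNReal.ofReal_mul (by positivity), ENNReal.toReal_ofReal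
          ENNReal.toReal_nonneg, show (n : ℝ) - 1 - (n - 2) = 1 by ring, Real.rpow_one]
        congr 1
        field_simp
        rw [mul_assoc, hr₁, mul_comm]
    _ ≤ _ := by gcongr
end

section
/- Let (X, 𝒜) be a measurable space, let σ and ω be finite measures on X, let U ∈ 𝒜 satisfy σ(U) > 0 and ω(U) > 0, and let (A_j)_{j ∈ J} be a countable measurable partition of U with σ(A_j) > 0 for every j. For a measurable set A with σ(A) > 0 write Θ(A) = ω(A)/σ(A). Let 0 < η₁ < η₂ < 1 and M > η₂/η₁, and suppose some index j₀ ∈ J satisfies η₁ < σ(A_{j₀})/σ(U) < η₂ and Θ(A_{j₀}) < M^{−1} Θ(U). Set M₁ = 1 + (1/2)((1 − M^{−1} η₂)/(1 − η₁) − 1). Then M₁ > 1, and there exists j ∈ J with j ≠ j₀ such that Θ(A_j) > M₁ Θ(U). -/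
open MeasureTheory

/-- (Density-increment dichotomy along a partition.) If a piece `A_{j₀}` of a
countable measurable partition of `U`, of relative `σ`-mass between `η₁` and `η₂`, has average
density `Θ(A_{j₀}) < M⁻¹ Θ(U)` with `M > η₂/η₁`, then some other piece `A_j` has density
`Θ(A_j) > M₁ Θ(U)` where `M₁ = 1 + ((1 - M⁻¹η₂)/(1-η₁) - 1)/2 > 1`. -/
theorem stmt9 {X : Type*} [MeasurableSpace X]
    (σ ω : Measure X) [IsFiniteMeasure σ] [IsFiniteMeasure ω]
    (U : Set X) (hU : MeasurableSet U) (hσU : 0 < σ U) (hωU : 0 < ω U)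
    {J : Type*} [Countable J] (A : J → Set X)
    (hAmeas : ∀ j, MeasurableSet (A j))
    (hdisj : Pairwise (Function.onFun Disjoint A))
    (hunion : (⋃ j, A j) = U)
    (hApos : ∀ j, 0 < σ (A j))
    (η₁ η₂ M : ℝ) (hη₁ : 0 < η₁) (hη₁₂ : η₁ < η₂) (hη₂ : η₂ < 1) (hM : η₂ / η₁ < M)
    (j₀ : J)
    (hj₀l : η₁ < (σ (A j₀)).toReal / (σ U).toReal)
    (hj₀u : (σ (A j₀)).toReal / (σ U).toReal < η₂)
    (hj₀Θ : (ω (A j₀)).toReal / (σ (A j₀)).toReal <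
      M⁻¹ * ((ω U).toReal / (σ U).toReal))
    (M₁ : ℝ) (hM₁ : M₁ = 1 + (1 / 2) * ((1 - M⁻¹ * η₂) / (1 - η₁) - 1)) :
    1 < M₁ ∧ ∃ j : J, j ≠ j₀ ∧
      M₁ * ((ω U).toReal / (σ U).toReal) < (ω (A j)).toReal / (σ (A j)).toReal := by
  classical
  have hη₂0 : 0 < η₂ := lt_trans hη₁ hη₁₂
  have hM1 : 1 < M := lt_trans ((one_lt_div hη₁).2 hη₁₂) hM
  have hM0 : 0 < M := lt_trans one_pos hM1
  have hMi0 : 0 < M⁻¹ := inv_pos.2 hM0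
  have hMiη : M⁻¹ * η₂ < η₁ := by
    have h1 : η₂ < M * η₁ := (div_lt_iff₀ hη₁).1 hM
    calc M⁻¹ * η₂ < M⁻¹ * (M * η₁) := by
          exact mul_lt_mul_of_pos_left h1 hMi0
      _ = η₁ := by field_simp
  have h1η₁ : 0 < 1 - η₁ := by linarith
  have hM₂ : 1 < (1 - M⁻¹ * η₂) / (1 - η₁) := (one_lt_div h1η₁).2 (by linarith)
  have hM₁1 : 1 < M₁ := by rw [hM₁]; linarith
  refine ⟨hM₁1, ?_⟩
  by_contra hcon
  push_neg at hcon
  -- real quantities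
  set s : ℝ := (σ U).toReal with hs
  set w : ℝ := (ω U).toReal with hw
  have hs0 : 0 < s := ENNReal.toReal_pos hσU.ne' (measure_ne_top σ U)
  have hw0 : 0 < w := ENNReal.toReal_pos hωU.ne' (measure_ne_top ω U)
  have hsj0 : ∀ j, 0 < (σ (A j)).toReal :=
    fun j => ENNReal.toReal_pos (hApos j).ne' (measure_ne_top σ _)
  have hwj0 : ∀ j, 0 ≤ (ω (A j)).toReal := fun j => ENNReal.toReal_nonneg
  set c : ℝ := M₁ * (w / s) with hc
  have hc0 : 0 < c := by positivity
  -- per-piece bound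
  have hbound : ∀ j, j ≠ j₀ → (ω (A j)).toReal ≤ c * (σ (A j)).toReal := by
    intro j hj
    have := hcon j hj
    rw [div_le_iff₀ (hsj0 j)] at this
    linarith [this]
  -- sums
  have hωtsum : (ω U).toReal = ∑' j, (ω (A j)).toReal := by
    rw [← hunion, measure_iUnion hdisj hAmeas,
      ENNReal.tsum_toReal_eq (fun j => measure_ne_top ω _)]
  have hσtsum : (σ U).toReal = ∑' j, (σ (A j)).toReal := by
    rw [← hunion, measure_iUnion hdisj hAmeas,
      ENNReal.tsum_toReal_eq (fun j => measure_ne_top σ _)]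
  have hsummω : Summable fun j => (ω (A j)).toReal :=
    ENNReal.summable_toReal (by
      rw [← measure_iUnion hdisj hAmeas, hunion]; exact measure_ne_top ω U)
  have hsummσ : Summable fun j => (σ (A j)).toReal :=
    ENNReal.summable_toReal (by
      rw [← measure_iUnion hdisj hAmeas, hunion]; exact measure_ne_top σ U)
  have hsplitω : w = (ω (A j₀)).toReal + ∑' j, ite (j = j₀) 0 (ω (A j)).toReal := by
    rw [hw, hωtsum]; exact Summable.tsum_eq_add_tsum_ite hsummω j₀
  have hsplitσ : s = (σ (A j₀)).toReal + ∑' j, ite (j = j₀) 0 (σ (A j)).toReal := by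
    rw [hs, hσtsum]; exact Summable.tsum_eq_add_tsum_ite hsummσ j₀
  have hupdω : (fun j => ite (j = j₀) 0 (ω (A j)).toReal)
      = Function.update (fun j => (ω (A j)).toReal) j₀ 0 := by
    funext j; simp [Function.update_apply]
  have hupdσ : (fun j => ite (j = j₀) 0 (σ (A j)).toReal)
      = Function.update (fun j => (σ (A j)).toReal) j₀ 0 := by
    funext j; simp [Function.update_apply]
  have hsumω' : Summable fun j => ite (j = j₀) 0 (ω (A j)).toReal := by
    rw [hupdω]; exact hsummω.update j₀ 0
  have hsumσ' : Summable fun j => ite (j = j₀) 0 (σ (A j)).toReal := by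
    rw [hupdσ]; exact hsummσ.update j₀ 0
  have hrest : (∑' j, ite (j = j₀) 0 (ω (A j)).toReal)
      ≤ c * ∑' j, ite (j = j₀) 0 (σ (A j)).toReal := by
    rw [← tsum_mul_left]
    refine Summable.tsum_le_tsum (fun j => ?_) hsumω' (hsumσ'.mul_left c)
    by_cases hj : j = j₀
    · simp [hj]
    · simp only [hj, if_false]
      exact hbound j hj
  set sj : ℝ := (σ (A j₀)).toReal with hsjdef
  set wj : ℝ := (ω (A j₀)).toReal with hwjdef
  have hrestσ : (∑' j, ite (j = j₀) 0 (σ (A j)).toReal) = s - sj := by linarith [hsplitσ]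
  have hkey : w ≤ wj + c * (s - sj) := by
    rw [← hrestσ]; linarith [hsplitω, hrest]
  -- numeric bounds on sj
  have hsjl : η₁ * s < sj := by
    have := (lt_div_iff₀ hs0).mp hj₀l
    linarith
  have hsju : sj < η₂ * s := (div_lt_iff₀ hs0).mp hj₀u
  have hwjlt : wj < M⁻¹ * (w / s) * sj := by
    have := (div_lt_iff₀ (hsj0 j₀)).mp hj₀Θ
    linarith
  -- combined
  have hfinal : w < M⁻¹ * (w / s) * sj + M₁ * (w / s) * (s - sj) := by
    rw [hc] at hkey; linarith
  -- contradiction: show RHS ≤ w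
  have hws : w / s * s = w := div_mul_cancel₀ w hs0.ne'
  have hMM₂ : M₁ < (1 - M⁻¹ * η₂) / (1 - η₁) := by rw [hM₁]; linarith
  have hM₂eq : ((1 - M⁻¹ * η₂) / (1 - η₁)) * (1 - η₁) = 1 - M⁻¹ * η₂ :=
    div_mul_cancel₀ _ h1η₁.ne'
  have h2 : M⁻¹ * sj + M₁ * (s - sj) < s := by
    have ha : M⁻¹ * sj < M⁻¹ * (η₂ * s) := mul_lt_mul_of_pos_left hsju hMi0
    have hb : s - sj < (1 - η₁) * s := by nlinarith
    have hM₁0 : 0 < M₁ := by linarith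
    have hcdef : M₁ * (s - sj) < M₁ * ((1 - η₁) * s) := by
      exact mul_lt_mul_of_pos_left hb hM₁0
    have hd : M₁ * ((1 - η₁) * s) ≤ ((1 - M⁻¹ * η₂) / (1 - η₁)) * ((1 - η₁) * s) := by
      apply mul_le_mul_of_nonneg_right (le_of_lt hMM₂)
      positivity
    have he : ((1 - M⁻¹ * η₂) / (1 - η₁)) * ((1 - η₁) * s) = (1 - M⁻¹ * η₂) * s := by
      rw [← mul_assoc, hM₂eq]
    have hf : (1 - M⁻¹ * η₂) * s = s - M⁻¹ * (η₂ * s) := by ring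
    linarith
  have h3 : M⁻¹ * (w / s) * sj + M₁ * (w / s) * (s - sj) ≤ w := by
    have : M⁻¹ * (w / s) * sj + M₁ * (w / s) * (s - sj)
        = (w / s) * (M⁻¹ * sj + M₁ * (s - sj)) := by ring
    rw [this]
    have hws0 : 0 < w / s := by positivity
    calc (w / s) * (M⁻¹ * sj + M₁ * (s - sj)) ≤ (w / s) * s := by
          exact mul_le_mul_of_nonneg_left (le_of_lt h2) (le_of_lt hws0)
      _ = w := hws
  linarith
end

section
/- Let n ≥ 3, let 0 < β₁ ≤ 1/6 and C ≥ 2, and set w = (log C)/β₁ⁿ and δ₀ = β₁^{3 n w}. Then w · log(1/(1 − β₁^{n−1})) > w · δ₀ · log(1/β₁) + log 2 + 2 log C; equivalently, (1 − β₁^{n−1})^w < β₁^{w δ₀} / (2 C²), and in particular 1 − β₁^{n−1} < β₁^{δ₀} · ((1/2) C^{−2})^{1/w}. -/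
/-- With `w = (log C)/β₁ⁿ` and `δ₀ = β₁^{3nw}`, for `0 < β₁ ≤ 1/6` and
`C ≥ 2` one has `w log(1/(1-β₁^{n-1})) > w δ₀ log(1/β₁) + log 2 + 2 log C`; equivalently
`(1-β₁^{n-1})^w < β₁^{wδ₀}/(2C²)`, and in particular
`1 - β₁^{n-1} < β₁^{δ₀} ((1/2) C^{-2})^{1/w}`. -/
theorem stmt11 (n : ℕ) (hn : 3 ≤ n) (β₁ C : ℝ)
    (hβ₁ : 0 < β₁) (hβ₁' : β₁ ≤ 1 / 6) (hC : 2 ≤ C)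
    (w δ₀ : ℝ) (hw : w = Real.log C / β₁ ^ n) (hδ₀ : δ₀ = β₁ ^ (3 * (n : ℝ) * w)) :
    w * Real.log (1 / (1 - β₁ ^ (n - 1))) >
      w * δ₀ * Real.log (1 / β₁) + Real.log 2 + 2 * Real.log C ∧
    (1 - β₁ ^ (n - 1)) ^ w < β₁ ^ (w * δ₀) / (2 * C ^ 2) ∧
    1 - β₁ ^ (n - 1) < β₁ ^ δ₀ * (1 / 2 * C ^ (-(2 : ℝ))) ^ (1 / w) := by
  have hβ1 : β₁ < 1 := by linarith
  have hlogC : 0 < Real.log C := Real.log_pos (by linarith)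
  have hβn : 0 < β₁ ^ n := pow_pos hβ₁ n
  have hw0 : 0 < w := by rw [hw]; positivity
  set a : ℝ := β₁ ^ (n - 1) with ha
  have ha0 : 0 < a := pow_pos hβ₁ _
  have ha1 : a ≤ 1 / 36 := by
    calc a ≤ β₁ ^ 2 := pow_le_pow_of_le_one hβ₁.le hβ1.le (by omega)
      _ ≤ (1/6) ^ 2 := by nlinarith
      _ = 1/36 := by norm_num
  have h1a : 0 < 1 - a := by linarith
  have hlog2 : Real.log 2 ≤ Real.log C := Real.log_le_log (by norm_num) hC
  have e2 : Real.log (1 / β₁) = -Real.log β₁ := by rw [one_div, Real.log_inv]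
  have e1 : Real.log (1 / (1 - a)) = -Real.log (1 - a) := by rw [one_div, Real.log_inv]
  have hlogβ' : 0 < Real.log (1 / β₁) := Real.log_pos (by rw [lt_div_iff₀ hβ₁]; linarith)
  set t : ℝ := w * Real.log (1 / β₁) with ht
  have ht0 : 0 < t := mul_pos hw0 hlogβ'
  have hn3 : (3 : ℝ) ≤ (n : ℝ) := by exact_mod_cast hn
  have hδ₀exp : δ₀ = Real.exp (-(3 * (n : ℝ) * t)) := by
    rw [hδ₀, Real.rpow_def_of_pos hβ₁]
    congr 1
    rw [ht, e2]
    ring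
  have hδ₀pos : 0 < δ₀ := by rw [hδ₀exp]; positivity
  -- bound the δ₀ term
  have hterm : w * δ₀ * Real.log (1 / β₁) < Real.log 2 := by
    have step1 : w * δ₀ * Real.log (1 / β₁) = t * Real.exp (-(3 * (n : ℝ) * t)) := by
      rw [hδ₀exp, ht]; ring
    have step2 : Real.exp (-(3 * (n : ℝ) * t)) ≤ Real.exp (-t) := by
      apply Real.exp_le_exp.mpr; nlinarith
    have step3 : t ≤ Real.exp (t - 1) := by
      have := Real.add_one_le_exp (t - 1); linarith
    have step4 : t * Real.exp (-t) ≤ Real.exp (-1) := by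
      have h4 : Real.exp (t - 1) * Real.exp (-t) = Real.exp (-1) := by
        rw [← Real.exp_add]; ring_nf
      have := mul_le_mul_of_nonneg_right step3 (Real.exp_nonneg (-t))
      linarith
    have step5 : Real.exp (-1) < Real.log 2 := by
      have he : (2.7 : ℝ) < Real.exp 1 := by
        have := Real.exp_one_gt_d9; linarith
      have hm : Real.exp (-1) * Real.exp 1 = 1 := by
        rw [← Real.exp_add]; norm_num
      have hl : (0.6931 : ℝ) < Real.log 2 := by
        have := Real.log_two_gt_d9; linarith
      nlinarith [Real.exp_pos (-1)]
    calc w * δ₀ * Real.log (1 / β₁) = t * Real.exp (-(3 * (n:ℝ) * t)) := step1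
      _ ≤ t * Real.exp (-t) := by nlinarith [Real.exp_pos (-(3 * (n:ℝ) * t))]
      _ ≤ Real.exp (-1) := step4
      _ < Real.log 2 := step5
  -- lower bound for LHS
  have hlog1a : a ≤ Real.log (1 / (1 - a)) := by
    have := Real.log_le_sub_one_of_pos h1a
    rw [e1]; linarith
  have hpow : β₁ ^ n = β₁ ^ (n - 1) * β₁ := by
    rw [← pow_succ]; congr 1; omega
  have hwa : w * a = Real.log C / β₁ := by
    rw [hw, ha, hpow]
    field_simp
  have h6 : 6 * Real.log C ≤ Real.log C / β₁ := by
    rw [le_div_iff₀ hβ₁]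
    have := mul_le_mul_of_nonneg_left hβ₁' hlogC.le
    linarith
  have hLHS : w * a ≤ w * Real.log (1 / (1 - a)) :=
    mul_le_mul_of_nonneg_left hlog1a hw0.le
  have hkey : w * Real.log (1 / (1 - a)) >
      w * δ₀ * Real.log (1 / β₁) + Real.log 2 + 2 * Real.log C := by
    have : w * δ₀ * Real.log (1 / β₁) + Real.log 2 + 2 * Real.log C < 4 * Real.log C := by
      linarith
    linarith [hwa ▸ hLHS]
  have h2 : (1 - a) ^ w < β₁ ^ (w * δ₀) / (2 * C ^ 2) := by
    have hkey' : Real.log (1 - a) * w <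
        Real.log β₁ * (w * δ₀) - (Real.log 2 + 2 * Real.log C) := by
      have q1 : w * Real.log (1 / (1 - a)) = -(Real.log (1 - a) * w) := by rw [e1]; ring
      have q2 : w * δ₀ * Real.log (1 / β₁) = -(Real.log β₁ * (w * δ₀)) := by rw [e2]; ring
      linarith [hkey, q1 ▸ hkey]
    have hC0 : (0 : ℝ) < C := by linarith
    have h2C : (2 * C ^ 2 : ℝ) = Real.exp (Real.log 2 + 2 * Real.log C) := by
      rw [Real.exp_add, Real.exp_log two_pos,
        show (2 : ℝ) * Real.log C = Real.log (C ^ 2) by rw [Real.log_pow]; push_cast; ring,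
        Real.exp_log (by positivity)]
    rw [Real.rpow_def_of_pos h1a, Real.rpow_def_of_pos hβ₁, h2C, ← Real.exp_sub]
    exact Real.exp_lt_exp.mpr (by linarith)
  refine ⟨hkey, h2, ?_⟩
  have hC0 : (0 : ℝ) < C := by linarith
  have hwne : w ≠ 0 := ne_of_gt hw0
  have h3 := Real.rpow_lt_rpow (Real.rpow_nonneg h1a.le w) h2
    (by positivity : (0:ℝ) < 1 / w)
  have eL : ((1 - a) ^ w) ^ (1 / w) = 1 - a := by
    rw [← Real.rpow_mul h1a.le, mul_one_div_cancel hwne, Real.rpow_one]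
  have eR : (β₁ ^ (w * δ₀) / (2 * C ^ 2)) ^ (1 / w)
      = β₁ ^ δ₀ * (1 / 2 * C ^ (-(2:ℝ))) ^ (1 / w) := by
    have hinv : (1 / 2 * C ^ (-(2:ℝ)) : ℝ) = (2 * C ^ 2)⁻¹ := by
      rw [show (-(2:ℝ)) = -((2:ℕ) : ℝ) by norm_num, Real.rpow_neg hC0.le,
        Real.rpow_natCast]
      field_simp
    rw [hinv, div_eq_mul_inv, Real.mul_rpow (Real.rpow_nonneg hβ₁.le _) (by positivity),
      ← Real.rpow_mul hβ₁.le, show w * δ₀ * (1 / w) = δ₀ by field_simp]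
  rw [eL, eR] at h3
  exact h3
end
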